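/- (Long's exact Grover search) Let H be a finite-dimensional Hilbert space, π a unit vector, Π_M an orthogonal projection with ε := ‖Π_M π‖² ∈ (0,1], and define |M⟩ := Π_M π / √ε and |M^⊥⟩ := (I - Π_M) π / √(1-ε). Define G(α,β) := (I - (1 - e^{iβ}) |π⟩⟨π|) · (I - (1 - e^{iα}) Π_M). If k is an integer with k ≥ π/(4 arcsin √ε) - 1/2 and α = β = 2 arcsin( sin(π/(4k+2)) / √ε ), then |⟨M| G(α,α)^k |π⟩| = 1. -/

import Mathlib

open scoped ComplexConjugate
open scoped InnerProductSpace

private lemma long_stepX (u sb cb s ct C S : ℂ)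
    (hu : u = 1 - 2*sb^2 + 2*sb*cb*Complex.I)
    (hcb : cb^2 = 1 - sb^2) (hct : ct^2 = 1 - s^2*sb^2) :
    u*(s*ct*(C*(1-2*s^2*sb^2) - S*(2*s*sb*ct)) + ((1-s^2)*sb + Complex.I*cb)*(S*(1-2*s^2*sb^2) + C*(2*s*sb*ct)))
    = u*(s*ct*C + ((1-s^2)*sb + Complex.I*cb)*S)*(1-(1-u)*s^2) - (1-u)*(1-s^2)*(s*(C*ct - S*(s*sb))) := by
  subst hu
  linear_combination (2*sb*s^2*S + 4*sb^2*s*ct*C*Complex.I^2 + (-4)*sb^2*s^3*ct*C*Complex.I^2 + (-4)*sb^2*cb*s^2*S*Complex.I^3 + (-4)*sb^3*s^4*S) * hcb + ((-2)*sb*s^2*S + (-4)*sb^2*cb*s^2*S*Complex.I + 4*sb^3*s^2*S) * hct + ((-2)*sb*cb^2*s^2*S + 4*sb^2*s*ct*C + (-4)*sb^2*s^3*ct*C + (-4)*sb^2*cb*s^2*S*Complex.I + 4*sb^3*cb^2*s^4*S + (-4)*sb^4*s*ct*C + 4*sb^4*s^3*ct*C + 4*sb^4*cb*s^2*S*Complex.I)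 * Complex.I_sq

private lemma long_stepY (u sb cb s ct C S : ℂ)
    (hu : u = 1 - 2*sb^2 + 2*sb*cb*Complex.I)
    (hcb : cb^2 = 1 - sb^2) (hct : ct^2 = 1 - s^2*sb^2) :
    u*(s*((C*(1-2*s^2*sb^2) - S*(2*s*sb*ct))*ct - (S*(1-2*s^2*sb^2) + C*(2*s*sb*ct))*(s*sb)))
    = -(u*(1-u)*s^2*(s*ct*C + ((1-s^2)*sb + Complex.I*cb)*S)) + (1-(1-u)*(1-s^2))*(s*(C*ct - S*(s*sb))) := by
  subst hu
  linear_combination ((-2)*sb*s^2*S*Complex.I^2 + (-4)*sb^2*s^3*ct*C*Complex.I^2 + (-4)*sb^2*cb*s^2*S*Complex.I^3 + (-4)*sb^3*s^2*S + (-4)*sb^3*s^4*S) * hcb + ((-2)*sb*s^2*S + (-4)*sb^2*cb*s^2*S*Complex.I + 4*sb^3*s^2*S) * hct + ((-2)*sb*s^2*S + (-4)*sb^2*s^3*ct*C + (-4)*sb^2*cb*s^2*S*Complex.I + 2*sb^3*s^2*S + 4*sb^3*cb^2*s^2*S + 4*sb^3*cb^2*s^4*S + 4*sb^4*s^3*ct*C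 + 4*sb^4*cb*s^2*S*Complex.I) * Complex.I_sq

private lemma grover_apply {H : Type*} [NormedAddCommGroup H] [InnerProductSpace ℂ H]
    (piv : H) (P : H →L[ℂ] H) (u e a b : ℂ) (v w : H)
    (hvw : piv = v + w) (hPv : P v = v) (hPw : P w = 0)
    (hpv : ⟪piv, v⟫_ℂ = e) (hpw : ⟪piv, w⟫_ℂ = 1 - e) :
    ((1 - (1-u) • ((innerSL ℂ piv).smulRight piv)) ∘L (1 - (1-u) • P)) (a•v + b•w)
    = (u*a*(1-(1-u)*e) - (1-u)*(1-e)*b) • v + (b - (1-u)*(u*e*a + (1-e)*b)) • w := by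
  have h1 : ((1 : H →L[ℂ] H) - (1-u) • P) (a•v + b•w) = (u*a)•v + b•w := by
    simp only [ContinuousLinearMap.sub_apply, ContinuousLinearMap.smul_apply,
      ContinuousLinearMap.one_apply, map_add, map_smul, hPv, hPw, smul_zero, add_zero]
    module
  rw [ContinuousLinearMap.comp_apply, h1]
  have h2 : ⟪piv, (u*a)•v + b•w⟫_ℂ = u*a*e + b*(1-e) := by
    rw [inner_add_right, inner_smul_right, inner_smul_right, hpv, hpw]
  simp only [ContinuousLinearMap.sub_apply, ContinuousLinearMap.smul_apply,
    ContinuousLinearMap.one_apply, ContinuousLinearMap.smulRight_apply, innerSL_apply_apply, h2]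
  rw [hvw]
  module

/-- Long's exact Grover search. -/
theorem long_exact_grover
    {H : Type*} [NormedAddCommGroup H] [InnerProductSpace ℂ H]
    [FiniteDimensional ℂ H] [CompleteSpace H]
    (piv : H) (hpi : ‖piv‖ = 1)
    (P : H →L[ℂ] H) (hProj : P ∘L P = P) (hSA : IsSelfAdjoint P)
    (ε : ℝ) (hε : ε = ‖P piv‖ ^ 2) (hε0 : 0 < ε) (hε1 : ε ≤ 1)
    (k : ℕ) (hk : (k : ℝ) ≥ Real.pi / (4 * Real.arcsin (Real.sqrt ε)) - 1 / 2)
    (α : ℝ)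
    (hα : α = 2 * Real.arcsin (Real.sin (Real.pi / (4 * k + 2)) / Real.sqrt ε)) :
    ‖
      (inner ℂ ((Real.sqrt ε)⁻¹ • P piv)
        (((((1 : H →L[ℂ] H)
              - (1 - Complex.exp (Complex.I * α)) • ((innerSL ℂ piv).smulRight piv)) ∘L
            ((1 : H →L[ℂ] H) - (1 - Complex.exp (Complex.I * α)) • P)) ^ k) piv)
        : ℂ)‖ = 1 := by
  have hπ2 : ⟪piv, piv⟫_ℂ = 1 := by
    rw [inner_self_eq_norm_sq_to_K, hpi]; norm_num
  have hPP : P (P piv) = P piv := by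
    conv_lhs => rw [← ContinuousLinearMap.comp_apply, hProj]
  have hSym := (ContinuousLinearMap.isSelfAdjoint_iff_isSymmetric.mp hSA)
  have hvv : ⟪P piv, P piv⟫_ℂ = (ε:ℂ) := by
    rw [inner_self_eq_norm_sq_to_K, hε]; norm_cast
  have hπv : ⟪piv, P piv⟫_ℂ = (ε:ℂ) := by
    have h := hSym piv (P piv)
    simp only [ContinuousLinearMap.coe_coe] at h
    rw [hPP] at h
    rw [← h]; exact hvv
  have hvπ : ⟪P piv, piv⟫_ℂ = (ε:ℂ) := by
    have h2 := hSym piv piv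
    simp only [ContinuousLinearMap.coe_coe] at h2
    rw [h2]; exact hπv
  -- basic real quantities
  set s : ℝ := Real.sqrt ε with hsdef
  have hs0 : 0 < s := Real.sqrt_pos.mpr hε0
  have hs2 : s^2 = ε := Real.sq_sqrt hε0.le
  have hs1 : s ≤ 1 := by
    rw [hsdef, show (1:ℝ) = Real.sqrt 1 by simp]
    exact Real.sqrt_le_sqrt hε1
  set A : ℝ := Real.arcsin s with hAdef
  have hA0 : 0 < A := Real.arcsin_pos.mpr hs0
  have hAle : A ≤ Real.pi / 2 := Real.arcsin_le_pi_div_two s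
  have hsinA : Real.sin A = s := Real.sin_arcsin (by linarith) hs1
  have hπpos := Real.pi_pos
  -- dispatch k = 0
  rcases Nat.eq_zero_or_pos k with hk0 | hk1
  · subst hk0
    push_cast at hk
    have hk' : Real.pi / (4*A) ≤ 1/2 := by linarith
    have h2A : Real.pi ≤ 2*A := by
      have := (div_le_iff₀ (by positivity : (0:ℝ) < 4*A)).mp hk'
      linarith
    have hs1' : s = 1 := by
      have hA2 : A = Real.pi/2 := le_antisymm hAle (by linarith)
      rw [← hsinA, hA2, Real.sin_pi_div_two]
    have hε1' : ε = 1 := by rw [← hs2, hs1']; norm_num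
    rw [pow_zero, hs1']
    norm_num
    rw [hvπ, hε1']
    norm_num
  -- main case k ≥ 1
  set t : ℝ := Real.pi / (4 * (k:ℝ) + 2) with htdef
  have hden : (0:ℝ) < 4*(k:ℝ)+2 := by positivity
  have ht0 : 0 < t := div_pos hπpos hden
  have hkA : Real.pi ≤ (4*(k:ℝ)+2)*A := by
    have h1 : Real.pi / (4*A) ≤ (k:ℝ) + 1/2 := by linarith [hk]
    have h2 := (div_le_iff₀ (by positivity : (0:ℝ) < 4*A)).mp h1
    have h3 : ((k:ℝ)+1/2)*(4*A) = (4*(k:ℝ)+2)*A := by ring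
    linarith
  have htA : t ≤ A := (div_le_iff₀ hden).mpr (by linarith [hkA])
  have htlt : t < Real.pi/2 := by
    have h6 : (6:ℝ) ≤ 4*(k:ℝ)+2 := by
      have : (1:ℝ) ≤ (k:ℝ) := by exact_mod_cast hk1
      linarith
    have : t ≤ Real.pi/6 := by
      rw [htdef]
      exact div_le_div_of_nonneg_left hπpos.le (by norm_num) h6
    linarith
  have hsint0 : 0 ≤ Real.sin t := Real.sin_nonneg_of_nonneg_of_le_pi ht0.le (by linarith)
  have hsinle : Real.sin t ≤ s := by
    rw [← hsinA]
    exact Real.strictMonoOn_sin.monotoneOn ⟨by linarith, by linarith⟩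
      ⟨by linarith, hAle⟩ htA
  set b : ℝ := Real.arcsin (Real.sin t / s) with hbdef
  set sb : ℝ := Real.sin b with hsbdef
  set cb : ℝ := Real.cos b with hcbdef
  set ct : ℝ := Real.cos t with hctdef
  have hct0 : 0 < ct := Real.cos_pos_of_mem_Ioo ⟨by linarith, htlt⟩
  have hq0 : 0 ≤ Real.sin t / s := div_nonneg hsint0 hs0.le
  have hsb : sb = Real.sin t / s :=
    Real.sin_arcsin (by linarith) ((div_le_one hs0).mpr hsinle)
  have hst : s * sb = Real.sin t := by rw [hsb]; field_simp
  have hαb : α = 2 * b := hα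
  -- complex ingredients
  set u : ℂ := Complex.exp (Complex.I * α) with hudef
  have hu : u = 1 - 2*(sb:ℂ)^2 + 2*(sb:ℂ)*(cb:ℂ)*Complex.I := by
    have hcosα : Real.cos α = 1 - 2*sb^2 := by
      rw [hαb, Real.cos_two_mul]
      have := Real.sin_sq_add_cos_sq b
      rw [← hsbdef, ← hcbdef] at this
      linarith
    have hsinα : Real.sin α = 2*sb*cb := by
      rw [hαb, Real.sin_two_mul, hsbdef, hcbdef]
      try ring
    have h1 : Complex.I * (α:ℂ) = (α:ℂ) * Complex.I := mul_comm _ _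
    rw [hudef, h1, Complex.exp_mul_I, ← Complex.ofReal_cos, ← Complex.ofReal_sin,
      hcosα, hsinα]
    push_cast; ring
  have hcbC : (cb:ℂ)^2 = 1 - (sb:ℂ)^2 := by
    have h : cb^2 = 1 - sb^2 := by
      have := Real.sin_sq_add_cos_sq b
      rw [← hsbdef, ← hcbdef] at this; linarith
    exact_mod_cast h
  have hctR : ct^2 = 1 - (s*sb)^2 := by
    have h := Real.sin_sq_add_cos_sq t
    rw [← hctdef, ← hst] at h
    linarith
  have hctC : (ct:ℂ)^2 = 1 - (s:ℂ)^2*(sb:ℂ)^2 := by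
    have h2 : (ct:ℂ)^2 = 1 - ((s:ℂ)*(sb:ℂ))^2 := by exact_mod_cast hctR
    rw [h2]; ring
  have habsu : ‖u‖ = 1 := by
    rw [hudef, mul_comm]
    exact_mod_cast Complex.norm_exp_ofReal_mul_I α
  -- vectors
  set v : H := P piv with hvdef
  set w : H := piv - P piv with hwdef
  have hpvw : piv = v + w := by rw [hvdef, hwdef]; abel
  have hPv : P v = v := hPP
  have hPw : P w = 0 := by rw [hwdef, map_sub, hPP, sub_self]
  have hπw : ⟪piv, w⟫_ℂ = 1 - (ε:ℂ) := by
    rw [hwdef, inner_sub_right, hπ2, hπv]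
  have hvw0 : ⟪v, w⟫_ℂ = 0 := by
    rw [hvdef, hwdef, inner_sub_right, hvπ, hvv, sub_self]
  -- the sequences
  set E : ℂ := (1-(s:ℂ)^2)*(sb:ℂ) + Complex.I*(cb:ℂ) with hEdef
  set X : ℕ → ℂ := fun j => u^j*((s:ℂ)*(ct:ℂ)*((Real.cos (2*(j:ℝ)*t)):ℂ)
    + E*((Real.sin (2*(j:ℝ)*t)):ℂ)) with hXdef
  set Y : ℕ → ℂ := fun j => u^j*(s:ℂ)*(((Real.cos (2*(j:ℝ)*t)):ℂ)*(ct:ℂ)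
    - ((Real.sin (2*(j:ℝ)*t)):ℂ)*((s:ℂ)*(sb:ℂ))) with hYdef
  set c : ℂ := ((s*ct : ℝ) : ℂ) with hcdef
  have hcC : c = (s:ℂ)*(ct:ℂ) := by rw [hcdef]; push_cast; ring
  have hsC : (s:ℂ) ≠ 0 := by exact_mod_cast hs0.ne'
  have hctC0 : (ct:ℂ) ≠ 0 := by exact_mod_cast hct0.ne'
  have hc0 : c ≠ 0 := by rw [hcC]; exact mul_ne_zero hsC hctC0
  have hεC : (ε:ℂ) = (s:ℂ)^2 := by
    rw [← hs2]; push_cast; ring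
  -- trig step identities (real side)
  have hcos2t : Real.cos (2*t) = 1 - 2*(s*sb)^2 := by
    have h := Real.sin_sq_add_cos_sq t
    rw [← hctdef, ← hst] at h
    rw [Real.cos_two_mul, ← hctdef]
    linarith
  have hsin2t : Real.sin (2*t) = 2*(s*sb)*ct := by
    rw [Real.sin_two_mul, ← hst, hctdef]
  have hCstep : ∀ j : ℕ, Real.cos (2*((j:ℝ)+1)*t)
      = Real.cos (2*(j:ℝ)*t)*(1-2*(s*sb)^2) - Real.sin (2*(j:ℝ)*t)*(2*(s*sb)*ct) := by
    intro j
    rw [show 2*((j:ℝ)+1)*t = 2*(j:ℝ)*t + 2*t by ring, Real.cos_add, hcos2t, hsin2t]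
  have hSstep : ∀ j : ℕ, Real.sin (2*((j:ℝ)+1)*t)
      = Real.sin (2*(j:ℝ)*t)*(1-2*(s*sb)^2) + Real.cos (2*(j:ℝ)*t)*(2*(s*sb)*ct) := by
    intro j
    rw [show 2*((j:ℝ)+1)*t = 2*(j:ℝ)*t + 2*t by ring, Real.sin_add, hcos2t, hsin2t]
  have hCstepC : ∀ j : ℕ, ((Real.cos (2*((j:ℝ)+1)*t) : ℝ) : ℂ)
      = ((Real.cos (2*(j:ℝ)*t) : ℝ) : ℂ)*(1-2*((s:ℂ)*(sb:ℂ))^2)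
        - ((Real.sin (2*(j:ℝ)*t) : ℝ) : ℂ)*(2*((s:ℂ)*(sb:ℂ))*(ct:ℂ)) := by
    intro j
    exact_mod_cast congrArg (fun x : ℝ => (x : ℂ)) (hCstep j)
  have hSstepC : ∀ j : ℕ, ((Real.sin (2*((j:ℝ)+1)*t) : ℝ) : ℂ)
      = ((Real.sin (2*(j:ℝ)*t) : ℝ) : ℂ)*(1-2*((s:ℂ)*(sb:ℂ))^2)
        + ((Real.cos (2*(j:ℝ)*t) : ℝ) : ℂ)*(2*((s:ℂ)*(sb:ℂ))*(ct:ℂ)) := by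
    intro j
    exact_mod_cast congrArg (fun x : ℝ => (x : ℂ)) (hSstep j)
  -- complex step identities
  have hXstep : ∀ j : ℕ, X (j+1) = u*(X j)*(1-(1-u)*(ε:ℂ)) - (1-u)*(1-(ε:ℂ))*(Y j) := by
    intro j
    rw [hεC]
    simp only [hXdef, hYdef, Nat.cast_succ]
    rw [hCstepC j, hSstepC j]
    linear_combination (u^j) * long_stepX u (sb:ℂ) (cb:ℂ) (s:ℂ) (ct:ℂ)
      ((Real.cos (2*(j:ℝ)*t)):ℂ) ((Real.sin (2*(j:ℝ)*t)):ℂ) hu hcbC hctC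
  have hYstep : ∀ j : ℕ, Y (j+1) = Y j - (1-u)*(u*(ε:ℂ)*(X j) + (1-(ε:ℂ))*(Y j)) := by
    intro j
    rw [hεC]
    simp only [hXdef, hYdef, Nat.cast_succ]
    rw [hCstepC j, hSstepC j]
    linear_combination (u^j) * long_stepY u (sb:ℂ) (cb:ℂ) (s:ℂ) (ct:ℂ)
      ((Real.cos (2*(j:ℝ)*t)):ℂ) ((Real.sin (2*(j:ℝ)*t)):ℂ) hu hcbC hctC
  -- the key induction
  set Gop : H →L[ℂ] H :=
    (((1 : H →L[ℂ] H) - (1 - u) • ((innerSL ℂ piv).smulRight piv)) ∘L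
      ((1 : H →L[ℂ] H) - (1 - u) • P)) with hGdef
  have key : ∀ j : ℕ, (Gop ^ j) piv = (X j / c) • v + (Y j / c) • w := by
    intro j
    induction j with
    | zero =>
      have hX0 : X 0 = c := by
        simp only [hXdef]
        norm_num [Real.cos_zero, Real.sin_zero]
        try rw [hcC]
      have hY0 : Y 0 = c := by
        simp only [hYdef]
        norm_num [Real.cos_zero, Real.sin_zero]
        rw [hcC]
        try ring
      rw [pow_zero, ContinuousLinearMap.one_apply, hX0, hY0, div_self hc0, one_smul, one_smul,
        hpvw]
    | succ j ih =>
      rw [pow_succ', ContinuousLinearMap.mul_apply, ih, hGdef]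
      rw [grover_apply piv P u (ε:ℂ) (X j / c) (Y j / c) v w hpvw hPv hPw hπv hπw,
        hXstep j, hYstep j]
      match_scalars <;> ring
  -- final evaluation
  rw [key k]
  have h2kt : 2*(k:ℝ)*t = Real.pi/2 - t := by
    have hden' : (4*(k:ℝ)+2) ≠ 0 := hden.ne'
    rw [htdef]
    field_simp
    ring
  have hCk : Real.cos (2*(k:ℝ)*t) = s*sb := by
    rw [h2kt, Real.cos_pi_div_two_sub, ← hst]
  have hSk : Real.sin (2*(k:ℝ)*t) = ct := by
    rw [h2kt, Real.sin_pi_div_two_sub, hctdef]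
  have hXk : X k = u^k * ((s:ℂ)*(ct:ℂ)*((s:ℂ)*(sb:ℂ)) + E*(ct:ℂ)) := by
    simp only [hXdef]
    rw [hCk, hSk]
    push_cast
    ring
  have hinner : (inner ℂ ((s⁻¹:ℝ) • v) ((X k / c) • v + (Y k / c) • w) : ℂ)
      = u^k * ((sb:ℂ) + Complex.I*(cb:ℂ)) := by
    rw [RCLike.real_smul_eq_coe_smul (K := ℂ), inner_smul_left, inner_add_right,
      inner_smul_right, inner_smul_right, hvv, hvw0, RCLike.conj_ofReal,
      hXk, hεC, hcC, hEdef]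
    push_cast
    field_simp
    linear_combination (u^k * (s:ℂ) * (ct:ℂ) * ((sb:ℂ) + Complex.I*(cb:ℂ))) * mul_inv_cancel₀ hsC
  rw [hinner, norm_mul, norm_pow, habsu, one_pow, one_mul,
    show (sb:ℂ) + Complex.I*(cb:ℂ) = (sb:ℂ) + (cb:ℂ)*Complex.I by ring,
    Complex.norm_add_mul_I]
  have hbc := Real.sin_sq_add_cos_sq b
  rw [← hsbdef, ← hcbdef] at hbc
  rw [show sb^2 + cb^2 = 1 by linarith, Real.sqrt_one]
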